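/- For a prime number n ≥ 5, the number of simple n-pyramitoids (equivalently, the number of triangulations of a convex n-gon by non-crossing diagonals, counted up to cyclic rotation) equals ((n+1)(n+2)···(2n-4))/(n-2)!. -/

import Mathlib

/-- Two vertices of the convex `n`-gon (modelled on `ZMod n`) are cyclically
adjacent. -/
def CycAdj (n : ℕ) (x y : ZMod n) : Prop := y = x + 1 ∨ x = y + 1

/-- A diagonal of the convex `n`-gon: a pair of distinct, non-adjacent
vertices. -/
def IsDiagonal (n : ℕ) (d : Finset (ZMod n)) : Prop :=
  d.card = 2 ∧ ∀ x ∈ d, ∀ y ∈ d, x ≠ y → ¬ CycAdj n x y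

/-- `x` lies strictly between `a` and `b` in the cyclic (clockwise) order. -/
def StrictBtw (n : ℕ) (a b x : ZMod n) : Prop :=
  0 < (x - a).val ∧ (x - a).val < (b - a).val

/-- Two diagonals of the convex `n`-gon cross. -/
def Crosses (n : ℕ) (d₁ d₂ : Finset (ZMod n)) : Prop :=
  ∃ a b x y : ZMod n, d₁ = {a, b} ∧ d₂ = {x, y} ∧
    StrictBtw n a b x ∧ StrictBtw n b a y

/-- A (minimal) triangulation of the convex `n`-gon: `n - 3` pairwise
non-crossing diagonals. -/
def IsTriangulation (n : ℕ) (D : Finset (Finset (ZMod n))) : Prop :=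
  (∀ d ∈ D, IsDiagonal n d) ∧
  (∀ d₁ ∈ D, ∀ d₂ ∈ D, d₁ ≠ d₂ → ¬ Crosses n d₁ d₂) ∧
  D.card = n - 3

/-- Rotation of a set of diagonals of the convex `n`-gon by `k` steps. -/
def rotateDiagonals (n : ℕ) (k : ZMod n) (D : Finset (Finset (ZMod n))) :
    Finset (Finset (ZMod n)) :=
  D.image (fun d => d.image (fun x => x + k))

open Finset

section Helpers
variable {n : ℕ}

lemma pair_cases {α : Type*} [DecidableEq α] {u v A B : α}
    (h : ({u, v} : Finset α) = {A, B}) (huv : u ≠ v) :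
    (A = u ∧ B = v) ∨ (A = v ∧ B = u) := by
  have hA : A ∈ ({u, v} : Finset α) := by rw [h]; simp
  have hB : B ∈ ({u, v} : Finset α) := by rw [h]; simp
  have hv' : v ∈ ({A, B} : Finset α) := by rw [← h]; simp
  have hu' : u ∈ ({A, B} : Finset α) := by rw [← h]; simp
  simp only [mem_insert, mem_singleton] at hA hB hv' hu'
  rcases hA with hA | hA <;> rcases hB with hB | hB
  · exfalso; rcases hv' with h' | h' <;> simp_all
  · exact Or.inl ⟨hA, hB⟩
  · exact Or.inr ⟨hA, hB⟩
  · exfalso; rcases hu' with h' | h' <;> simp_all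

lemma zmod_add_inj (hn : 0 < n) {a : ZMod n} {i j : ℕ} (hi : i < n) (hj : j < n)
    (h : a + (i : ZMod n) = a + (j : ZMod n)) : i = j := by
  have h2 : ((i : ZMod n)).val = ((j : ZMod n)).val := by rw [add_left_cancel h]
  rwa [ZMod.val_natCast_of_lt hi, ZMod.val_natCast_of_lt hj] at h2

lemma zmod_sub_val (hn : 0 < n) (a : ZMod n) {i j : ℕ} (hi : i < n) (hj : j < n) :
    ((a + (i : ZMod n)) - (a + (j : ZMod n))).val = if j ≤ i then i - j else n + i - j := by
  haveI : NeZero n := ⟨hn.ne'⟩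
  have key : ((i + (n - j) : ℕ) : ZMod n) = (a + (i : ZMod n)) - (a + (j : ZMod n)) := by
    rw [Nat.cast_add, Nat.cast_sub hj.le, ZMod.natCast_self]
    ring
  rw [← key, ZMod.val_natCast]
  rcases le_or_gt j i with hji | hji
  · have h1 : i + (n - j) = n + (i - j) := by omega
    rw [if_pos hji, h1, Nat.add_mod_left, Nat.mod_eq_of_lt (by omega)]
  · have h1 : i + (n - j) = n + i - j := by omega
    rw [if_neg (by omega), h1, Nat.mod_eq_of_lt (by omega)]

lemma strictBtw_iff (hn : 0 < n) (a : ZMod n) {u v w : ℕ} (hu : u < n) (hv : v < n) (hw : w < n) :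
    StrictBtw n (a + (u : ZMod n)) (a + (v : ZMod n)) (a + (w : ZMod n)) ↔
      (0 < (if u ≤ w then w - u else n + w - u) ∧
        (if u ≤ w then w - u else n + w - u) < (if u ≤ v then v - u else n + v - u)) := by
  unfold StrictBtw
  rw [zmod_sub_val hn a hw hu, zmod_sub_val hn a hv hu]

lemma crosses_iff (hn : 0 < n) (a : ZMod n) {i j x y : ℕ}
    (hj : j < n) (hy : y < n) (hij : i < j) (hxy : x < y) :
    Crosses n {a + (i : ZMod n), a + (j : ZMod n)} {a + (x : ZMod n), a + (y : ZMod n)} ↔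
      (i < x ∧ x < j ∧ j < y) ∨ (x < i ∧ i < y ∧ y < j) := by
  have hi : i < n := lt_trans hij hj
  have hx : x < n := lt_trans hxy hy
  constructor
  · rintro ⟨A, B, X, Y, h1, h2, hb1, hb2⟩
    have hij' : a + (i : ZMod n) ≠ a + (j : ZMod n) :=
      fun h => absurd (zmod_add_inj hn hi hj h) (by omega)
    have hxy' : a + (x : ZMod n) ≠ a + (y : ZMod n) :=
      fun h => absurd (zmod_add_inj hn hx hy h) (by omega)
    rcases pair_cases h1 hij' with ⟨hA, hB⟩ | ⟨hA, hB⟩ <;>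
      rcases pair_cases h2 hxy' with ⟨hX, hY⟩ | ⟨hX, hY⟩ <;> subst hA <;> subst hB <;>
      subst hX <;> subst hY
    · rw [strictBtw_iff hn a hi hj hx] at hb1
      rw [strictBtw_iff hn a hj hi hy] at hb2
      split_ifs at hb1 hb2 <;> omega
    · rw [strictBtw_iff hn a hi hj hy] at hb1
      rw [strictBtw_iff hn a hj hi hx] at hb2
      split_ifs at hb1 hb2 <;> omega
    · rw [strictBtw_iff hn a hj hi hx] at hb1
      rw [strictBtw_iff hn a hi hj hy] at hb2
      split_ifs at hb1 hb2 <;> omega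
    · rw [strictBtw_iff hn a hj hi hy] at hb1
      rw [strictBtw_iff hn a hi hj hx] at hb2
      split_ifs at hb1 hb2 <;> omega
  · rintro (⟨h1, h2, h3⟩ | ⟨h1, h2, h3⟩)
    · refine ⟨a + (i : ZMod n), a + (j : ZMod n), a + (x : ZMod n), a + (y : ZMod n),
        rfl, rfl, ?_, ?_⟩
      · rw [strictBtw_iff hn a hi hj hx]; split_ifs <;> omega
      · rw [strictBtw_iff hn a hj hi hy]; split_ifs <;> omega
    · refine ⟨a + (i : ZMod n), a + (j : ZMod n), a + (y : ZMod n), a + (x : ZMod n),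
        rfl, Finset.pair_comm _ _, ?_, ?_⟩
      · rw [strictBtw_iff hn a hi hj hy]; split_ifs <;> omega
      · rw [strictBtw_iff hn a hj hi hx]; split_ifs <;> omega

end Helpers

def ArcDiag (n : ℕ) (a : ZMod n) (k : ℕ) (d : Finset (ZMod n)) : Prop :=
  ∃ i j : ℕ, i + 2 ≤ j ∧ j ≤ k ∧ ¬(i = 0 ∧ j = k) ∧
    d = {a + (i : ZMod n), a + (j : ZMod n)}

def Noncross (n : ℕ) (D : Finset (Finset (ZMod n))) : Prop :=
  ∀ d₁ ∈ D, ∀ d₂ ∈ D, d₁ ≠ d₂ → ¬ Crosses n d₁ d₂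

section Arc
variable {n : ℕ}

lemma pair_pos_inj (hn : 0 < n) (a : ZMod n) {i j x y : ℕ} (hij : i < j) (hxy : x < y)
    (hj : j < n) (hy : y < n)
    (h : ({a + (i : ZMod n), a + (j : ZMod n)} : Finset (ZMod n)) =
      {a + (x : ZMod n), a + (y : ZMod n)}) : i = x ∧ j = y := by
  have hi : i < n := lt_trans hij hj
  have hx : x < n := lt_trans hxy hy
  have hne : a + (i : ZMod n) ≠ a + (j : ZMod n) :=
    fun h' => absurd (zmod_add_inj hn hi hj h') (by omega)
  rcases pair_cases h hne with ⟨h1, h2⟩ | ⟨h1, h2⟩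
  · exact ⟨(zmod_add_inj hn hx hi h1).symm, (zmod_add_inj hn hy hj h2).symm⟩
  · have e1 := zmod_add_inj hn hx hj h1
    have e2 := zmod_add_inj hn hy hi h2
    omega

lemma noncross_subset {D D' : Finset (Finset (ZMod n))} (h : D' ⊆ D) (hnc : Noncross n D) :
    Noncross n D' := fun d1 h1 d2 h2 => hnc d1 (h h1) d2 (h h2)

lemma arc_card_le (hn : 0 < n) :
    ∀ k, k < n → ∀ (a : ZMod n) (D : Finset (Finset (ZMod n))),
      (∀ d ∈ D, ArcDiag n a k d) → Noncross n D → D.card ≤ k - 2 := by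
  intro k
  induction k using Nat.strong_induction_on with
  | _ k IH =>
    intro hkn a D hdiag hnc
    classical
    by_cases hk3 : k < 3
    · have hD : D = ∅ := by
        rw [Finset.eq_empty_iff_forall_notMem]
        intro d hd
        obtain ⟨i, j, hij, hjk, hnot, rfl⟩ := hdiag d hd
        omega
      simp [hD]
    push_neg at hk3
    have ha0 : a + ((0 : ℕ) : ZMod n) = a := by simp
    set S : Finset ℕ := (Finset.Ico 1 k).filter
      (fun τ => τ = 1 ∨ ({a, a + (τ : ZMod n)} : Finset (ZMod n)) ∈ D) with hS
    have hS1 : 1 ∈ S := by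
      simp only [hS, mem_filter, mem_Ico]
      exact ⟨⟨le_refl 1, by omega⟩, Or.inl trivial⟩
    set t : ℕ := S.max' ⟨1, hS1⟩ with htdef
    have htS : t ∈ S := S.max'_mem _
    have htIco : 1 ≤ t ∧ t < k := by
      have := (mem_filter.mp htS).1; rw [mem_Ico] at this; omega
    have ht1 : 1 ≤ t := htIco.1
    have htk : t < k := htIco.2
    have htn : t < n := lt_trans htk hkn
    have htD : t = 1 ∨ ({a, a + (t : ZMod n)} : Finset (ZMod n)) ∈ D := (mem_filter.mp htS).2
    have htmax : ∀ j ∈ S, j ≤ t := fun j hj => S.le_max' j hj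
    have recast : ∀ i : ℕ, t ≤ i → a + (i : ZMod n) = (a + (t : ZMod n)) + ((i - t : ℕ) : ZMod n) := by
      intro i hti
      rw [Nat.cast_sub hti]; ring
    -- the split claim
    have split : ∀ d ∈ D, ArcDiag n a t d ∨ ArcDiag n (a + (t : ZMod n)) (k - t) d ∨
        d = {a, a + (t : ZMod n)} ∨ d = {a + (t : ZMod n), a + (k : ZMod n)} := by
      intro d hd
      obtain ⟨i, j, hij2, hjk, hnot, rfl⟩ := hdiag d hd
      have hjn : j < n := lt_of_le_of_lt hjk hkn
      rcases le_or_gt j t with hjt | htj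
      · by_cases h0 : i = 0 ∧ j = t
        · right; right; left; rw [h0.1, h0.2, ha0]
        · exact Or.inl ⟨i, j, hij2, hjt, h0, rfl⟩
      · rcases le_or_gt t i with hti | hit
        · by_cases h0 : i = t ∧ j = k
          · right; right; right; rw [h0.1, h0.2]
          · right; left
            refine ⟨i - t, j - t, by omega, by omega, by omega, ?_⟩
            rw [← recast i hti, ← recast j (by omega)]
        · exfalso
          rcases Nat.eq_zero_or_pos i with h0 | hipos
          · subst h0
            have hjS : j ∈ S := by
              simp only [hS, mem_filter, mem_Ico]
              refine ⟨⟨by omega, by omega⟩, Or.inr ?_⟩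
              rwa [ha0] at hd
            have := htmax j hjS; omega
          · have ht2 : 2 ≤ t := by omega
            have hc1D : ({a, a + (t : ZMod n)} : Finset (ZMod n)) ∈ D := by
              rcases htD with h | h; · omega
              exact h
            have hne : ({a, a + (t : ZMod n)} : Finset (ZMod n)) ≠
                {a + (i : ZMod n), a + (j : ZMod n)} := by
              intro heq
              have heq' : ({a + ((0:ℕ) : ZMod n), a + (t : ZMod n)} : Finset (ZMod n)) =
                  {a + (i : ZMod n), a + (j : ZMod n)} := by rw [ha0]; exact heq
              have := pair_pos_inj hn a (show (0:ℕ) < t by omega) (show i < j by omega)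
                htn hjn heq'
              omega
            have hcr : Crosses n ({a, a + (t : ZMod n)} : Finset (ZMod n))
                ({a + (i : ZMod n), a + (j : ZMod n)} : Finset (ZMod n)) := by
              have h' := (crosses_iff hn a htn hjn (show (0:ℕ) < t by omega) (show i < j by omega)).mpr
                (Or.inl ⟨by omega, by omega, by omega⟩)
              rwa [ha0] at h'
            exact hnc _ hc1D _ hd hne hcr
    -- counting
    set c1 : Finset (ZMod n) := {a, a + (t : ZMod n)} with hc1def
    set c2 : Finset (ZMod n) := {a + (t : ZMod n), a + (k : ZMod n)} with hc2def
    set D1 := D.filter (fun d => ArcDiag n a t d) with hD1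
    set D2 := D.filter (fun d => ArcDiag n (a + (t : ZMod n)) (k - t) d) with hD2
    set C := D.filter (fun d => d = c1 ∨ d = c2) with hC
    have hsub : D ⊆ D1 ∪ D2 ∪ C := by
      intro d hd
      rcases split d hd with h | h | h | h
      · exact mem_union_left _ (mem_union_left _ (mem_filter.mpr ⟨hd, h⟩))
      · exact mem_union_left _ (mem_union_right _ (mem_filter.mpr ⟨hd, h⟩))
      · exact mem_union_right _ (mem_filter.mpr ⟨hd, Or.inl h⟩)
      · exact mem_union_right _ (mem_filter.mpr ⟨hd, Or.inr h⟩)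
    have hcard : D.card ≤ D1.card + D2.card + C.card := by
      calc D.card ≤ (D1 ∪ D2 ∪ C).card := card_le_card hsub
        _ ≤ (D1 ∪ D2).card + C.card := card_union_le _ _
        _ ≤ D1.card + D2.card + C.card := by
            exact Nat.add_le_add_right (card_union_le _ _) _
    have hd1 : D1.card ≤ t - 2 :=
      IH t htk htn a D1 (fun d hd => (mem_filter.mp hd).2)
        (noncross_subset (filter_subset _ _) hnc)
    have hd2 : D2.card ≤ (k - t) - 2 :=
      IH (k - t) (by omega) (by omega) (a + (t : ZMod n)) D2
        (fun d hd => (mem_filter.mp hd).2) (noncross_subset (filter_subset _ _) hnc)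
    have hc1mem : c1 ∈ D → 2 ≤ t := by
      intro h
      obtain ⟨i, j, hij2, hjk, hnot, heq⟩ := hdiag c1 h
      rw [hc1def] at heq
      have heq' : ({a + ((0:ℕ) : ZMod n), a + (t : ZMod n)} : Finset (ZMod n)) =
          {a + (i : ZMod n), a + (j : ZMod n)} := by rw [ha0]; exact heq
      have := pair_pos_inj hn a (show (0:ℕ) < t by omega) (show i < j by omega)
        htn (by omega) heq'
      omega
    have hc2mem : c2 ∈ D → 2 ≤ k - t := by
      intro h
      obtain ⟨i, j, hij2, hjk, hnot, heq⟩ := hdiag c2 h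
      rw [hc2def] at heq
      have := pair_pos_inj hn a htk (show i < j by omega) hkn (by omega) heq
      omega
    by_cases h1 : c1 ∈ D <;> by_cases h2 : c2 ∈ D
    · have hCc : C.card ≤ 2 := by
        have : C ⊆ {c1, c2} := by
          intro d hd
          rcases (mem_filter.mp hd).2 with h | h <;> simp [h]
        exact le_trans (card_le_card this) (le_trans (card_insert_le _ _) (by simp))
      have := hc1mem h1; have := hc2mem h2; omega
    · have hCc : C.card ≤ 1 := by
        have : C ⊆ {c1} := by
          intro d hd
          rcases (mem_filter.mp hd).2 with h | h
          · simp [h]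
          · exact absurd ((mem_filter.mp hd).1 : d ∈ D) (by rw [h]; exact h2)
        exact le_trans (card_le_card this) (by simp)
      have := hc1mem h1; omega
    · have hCc : C.card ≤ 1 := by
        have : C ⊆ {c2} := by
          intro d hd
          rcases (mem_filter.mp hd).2 with h | h
          · exact absurd ((mem_filter.mp hd).1 : d ∈ D) (by rw [h]; exact h1)
          · simp [h]
        exact le_trans (card_le_card this) (by simp)
      have := hc2mem h2; omega
    · have hCc : C.card = 0 := by
        rw [Finset.card_eq_zero, Finset.eq_empty_iff_forall_notMem]
        intro d hd
        rcases (mem_filter.mp hd).2 with h | h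
        · exact h1 (h ▸ (mem_filter.mp hd).1)
        · exact h2 (h ▸ (mem_filter.mp hd).1)
      omega

end Arc

section Count
variable {n : ℕ}

lemma ha0' (a : ZMod n) : a + ((0 : ℕ) : ZMod n) = a := by simp

lemma cross_pos (hn : 0 < n) (a : ZMod n) {i1 j1 i2 j2 : ℕ}
    (hj1 : j1 < n) (hj2 : j2 < n) (h1 : i1 < j1) (h2 : i2 < j2)
    (hsep : j1 ≤ i2 ∨ j2 ≤ i1 ∨ (i1 ≤ i2 ∧ j2 ≤ j1) ∨ (i2 ≤ i1 ∧ j1 ≤ j2)) :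
    ¬ Crosses n {a + (i1 : ZMod n), a + (j1 : ZMod n)} {a + (i2 : ZMod n), a + (j2 : ZMod n)} := by
  intro h
  rcases (crosses_iff hn a hj1 hj2 h1 h2).mp h with h' | h' <;> omega

lemma arcdiag_shift (a : ZMod n) {t k : ℕ} (htk : t ≤ k) {d : Finset (ZMod n)} :
    ArcDiag n (a + (t : ZMod n)) (k - t) d ↔
      ∃ i j : ℕ, i + 2 ≤ j ∧ j ≤ k ∧ t ≤ i ∧ ¬(i = t ∧ j = k) ∧
        d = {a + (i : ZMod n), a + (j : ZMod n)} := by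
  constructor
  · rintro ⟨i', j', hij, hjk, hnot, rfl⟩
    refine ⟨t + i', t + j', by omega, by omega, by omega, by omega, ?_⟩
    push_cast
    congr 1 <;> [skip; congr 1] <;> ring
  · rintro ⟨i, j, hij, hjk, hti, hnot, rfl⟩
    refine ⟨i - t, j - t, by omega, by omega, by omega, ?_⟩
    have e1 : a + (i : ZMod n) = (a + (t : ZMod n)) + ((i - t : ℕ) : ZMod n) := by
      rw [Nat.cast_sub hti]; ring
    have e2 : a + (j : ZMod n) = (a + (t : ZMod n)) + ((j - t : ℕ) : ZMod n) := by
      rw [Nat.cast_sub (by omega : t ≤ j)]; ring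
    rw [e1, e2]

variable [NeZero n]

open Classical in
noncomputable def triF (n : ℕ) [NeZero n] (a : ZMod n) (k : ℕ) :
    Finset (Finset (Finset (ZMod n))) :=
  Finset.univ.filter (fun D => (∀ d ∈ D, ArcDiag n a k d) ∧ Noncross n D ∧ D.card = k - 2)

lemma mem_triF {a : ZMod n} {k : ℕ} {D : Finset (Finset (ZMod n))} :
    D ∈ triF n a k ↔ (∀ d ∈ D, ArcDiag n a k d) ∧ Noncross n D ∧ D.card = k - 2 := by
  simp [triF]

noncomputable def glue (n : ℕ) (a : ZMod n) (k t : ℕ)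
    (p : Finset (Finset (ZMod n)) × Finset (Finset (ZMod n))) : Finset (Finset (ZMod n)) :=
  p.1 ∪ p.2 ∪ ((if 2 ≤ t then {({a, a + (t : ZMod n)} : Finset (ZMod n))} else ∅) ∪
    (if 2 ≤ k - t then {({a + (t : ZMod n), a + (k : ZMod n)} : Finset (ZMod n))} else ∅))

lemma mem_glue {a : ZMod n} {k t : ℕ} {p : Finset (Finset (ZMod n)) × Finset (Finset (ZMod n))}
    {d : Finset (ZMod n)} :
    d ∈ glue n a k t p ↔ d ∈ p.1 ∨ d ∈ p.2 ∨
      (2 ≤ t ∧ d = {a, a + (t : ZMod n)}) ∨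
      (2 ≤ k - t ∧ d = {a + (t : ZMod n), a + (k : ZMod n)}) := by
  unfold glue
  by_cases g1 : 2 ≤ t <;> by_cases g2 : 2 ≤ k - t <;>
    simp [mem_union, g1, g2] <;> tauto

section Chords
variable (hn : 0 < n) (a : ZMod n) {k t : ℕ} (ht1 : 1 ≤ t) (htk : t < k) (hkn : k < n)
include hn ht1 htk hkn

lemma not_arc_left_c1 : ¬ ArcDiag n a t ({a, a + (t : ZMod n)} : Finset (ZMod n)) := by
  rintro ⟨i, j, hij, hjk, hnot, heq⟩
  have heq' : ({a + ((0:ℕ) : ZMod n), a + (t : ZMod n)} : Finset (ZMod n)) =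
      {a + (i : ZMod n), a + (j : ZMod n)} := by rw [ha0']; exact heq
  have := pair_pos_inj hn a (show (0:ℕ) < t by omega) (show i < j by omega)
    (by omega) (by omega) heq'
  omega

lemma not_arc_right_c1 : ¬ ArcDiag n (a + (t : ZMod n)) (k - t)
    ({a, a + (t : ZMod n)} : Finset (ZMod n)) := by
  intro h
  obtain ⟨i, j, hij, hjk, hti, hnot, heq⟩ := (arcdiag_shift a (by omega)).mp h
  have heq' : ({a + ((0:ℕ) : ZMod n), a + (t : ZMod n)} : Finset (ZMod n)) =
      {a + (i : ZMod n), a + (j : ZMod n)} := by rw [ha0']; exact heq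
  have := pair_pos_inj hn a (show (0:ℕ) < t by omega) (show i < j by omega)
    (by omega) (by omega) heq'
  omega

lemma not_arc_left_c2 : ¬ ArcDiag n a t
    ({a + (t : ZMod n), a + (k : ZMod n)} : Finset (ZMod n)) := by
  rintro ⟨i, j, hij, hjk, hnot, heq⟩
  have := pair_pos_inj hn a htk (show i < j by omega) hkn (by omega) heq
  omega

lemma not_arc_right_c2 : ¬ ArcDiag n (a + (t : ZMod n)) (k - t)
    ({a + (t : ZMod n), a + (k : ZMod n)} : Finset (ZMod n)) := by
  intro h
  obtain ⟨i, j, hij, hjk, hti, hnot, heq⟩ := (arcdiag_shift a (by omega)).mp h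
  have := pair_pos_inj hn a htk (show i < j by omega) hkn (by omega) heq
  omega

lemma c1_ne_c2 : ({a, a + (t : ZMod n)} : Finset (ZMod n)) ≠
    ({a + (t : ZMod n), a + (k : ZMod n)} : Finset (ZMod n)) := by
  intro heq
  have heq' : ({a + ((0:ℕ) : ZMod n), a + (t : ZMod n)} : Finset (ZMod n)) =
      {a + (t : ZMod n), a + (k : ZMod n)} := by rw [ha0']; exact heq
  have := pair_pos_inj hn a (show (0:ℕ) < t by omega) htk (by omega) hkn heq'
  omega

lemma arc_left_right_disj {d : Finset (ZMod n)} (h1 : ArcDiag n a t d)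
    (h2 : ArcDiag n (a + (t : ZMod n)) (k - t) d) : False := by
  obtain ⟨i, j, hij, hjt, hnot, rfl⟩ := h1
  obtain ⟨x, y, hxy, hyk, htx, hnot2, heq⟩ := (arcdiag_shift a (by omega)).mp h2
  have := pair_pos_inj hn a (show i < j by omega) (show x < y by omega)
    (by omega) (by omega) heq
  omega

end Chords
end Count

section Split
variable {n : ℕ}

lemma exists_split (hn : 0 < n) {k : ℕ} (hk3 : 3 ≤ k) (hkn : k < n) (a : ZMod n)
    (D : Finset (Finset (ZMod n))) (hdiag : ∀ d ∈ D, ArcDiag n a k d) (hnc : Noncross n D) :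
    ∃ t, 1 ≤ t ∧ t < k ∧
      (({a, a + (t : ZMod n)} : Finset (ZMod n)) ∈ D → 2 ≤ t) ∧
      (2 ≤ t → ({a, a + (t : ZMod n)} : Finset (ZMod n)) ∈ D) ∧
      ∀ d ∈ D, ArcDiag n a t d ∨ ArcDiag n (a + (t : ZMod n)) (k - t) d ∨
        d = {a, a + (t : ZMod n)} ∨ d = {a + (t : ZMod n), a + (k : ZMod n)} := by
  classical
  have ha0 : a + ((0 : ℕ) : ZMod n) = a := ha0' a
  set S : Finset ℕ := (Finset.Ico 1 k).filter
    (fun τ => τ = 1 ∨ ({a, a + (τ : ZMod n)} : Finset (ZMod n)) ∈ D) with hS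
  have hS1 : 1 ∈ S := by
    simp only [hS, mem_filter, mem_Ico]
    exact ⟨⟨le_refl 1, by omega⟩, Or.inl trivial⟩
  set t : ℕ := S.max' ⟨1, hS1⟩ with htdef
  have htS : t ∈ S := S.max'_mem _
  have htIco : 1 ≤ t ∧ t < k := by
    have := (mem_filter.mp htS).1; rw [mem_Ico] at this; omega
  have ht1 : 1 ≤ t := htIco.1
  have htk : t < k := htIco.2
  have htn : t < n := lt_trans htk hkn
  have htD : t = 1 ∨ ({a, a + (t : ZMod n)} : Finset (ZMod n)) ∈ D := (mem_filter.mp htS).2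
  have htmax : ∀ j ∈ S, j ≤ t := fun j hj => S.le_max' j hj
  have recast : ∀ i : ℕ, t ≤ i →
      a + (i : ZMod n) = (a + (t : ZMod n)) + ((i - t : ℕ) : ZMod n) := by
    intro i hti
    rw [Nat.cast_sub hti]; ring
  refine ⟨t, ht1, htk, ?_, ?_, ?_⟩
  · -- chord1 ∈ D → 2 ≤ t
    intro h
    obtain ⟨i, j, hij2, hjk, hnot, heq⟩ := hdiag _ h
    have heq' : ({a + ((0:ℕ) : ZMod n), a + (t : ZMod n)} : Finset (ZMod n)) =
        {a + (i : ZMod n), a + (j : ZMod n)} := by rw [ha0]; exact heq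
    have := pair_pos_inj hn a (show (0:ℕ) < t by omega) (show i < j by omega)
      htn (by omega) heq'
    omega
  · intro h2t
    rcases htD with h | h; · omega
    exact h
  · intro d hd
    obtain ⟨i, j, hij2, hjk, hnot, rfl⟩ := hdiag d hd
    have hjn : j < n := lt_of_le_of_lt hjk hkn
    rcases le_or_gt j t with hjt | htj
    · by_cases h0 : i = 0 ∧ j = t
      · right; right; left; rw [h0.1, h0.2, ha0]
      · exact Or.inl ⟨i, j, hij2, hjt, h0, rfl⟩
    · rcases le_or_gt t i with hti | hit
      · by_cases h0 : i = t ∧ j = k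
        · right; right; right; rw [h0.1, h0.2]
        · right; left
          refine ⟨i - t, j - t, by omega, by omega, by omega, ?_⟩
          rw [← recast i hti, ← recast j (by omega)]
      · exfalso
        rcases Nat.eq_zero_or_pos i with h0 | hipos
        · subst h0
          have hjS : j ∈ S := by
            simp only [hS, mem_filter, mem_Ico]
            refine ⟨⟨by omega, by omega⟩, Or.inr ?_⟩
            rwa [ha0] at hd
          have := htmax j hjS; omega
        · have ht2 : 2 ≤ t := by omega
          have hc1D : ({a, a + (t : ZMod n)} : Finset (ZMod n)) ∈ D := by
            rcases htD with h | h; · omega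
            exact h
          have hne : ({a, a + (t : ZMod n)} : Finset (ZMod n)) ≠
              {a + (i : ZMod n), a + (j : ZMod n)} := by
            intro heq
            have heq' : ({a + ((0:ℕ) : ZMod n), a + (t : ZMod n)} : Finset (ZMod n)) =
                {a + (i : ZMod n), a + (j : ZMod n)} := by rw [ha0]; exact heq
            have := pair_pos_inj hn a (show (0:ℕ) < t by omega) (show i < j by omega)
              htn hjn heq'
            omega
          have hcr : Crosses n ({a, a + (t : ZMod n)} : Finset (ZMod n))
              ({a + (i : ZMod n), a + (j : ZMod n)} : Finset (ZMod n)) := by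
            have h' := (crosses_iff hn a htn hjn (show (0:ℕ) < t by omega)
              (show i < j by omega)).mpr (Or.inl ⟨by omega, by omega, by omega⟩)
            rwa [ha0] at h'
          exact hnc _ hc1D _ hd hne hcr

end Split

section Glue
variable {n : ℕ} [NeZero n]

lemma glue_mem (hn : 0 < n) {a : ZMod n} {k t : ℕ}
    {p : Finset (Finset (ZMod n)) × Finset (Finset (ZMod n))}
    (hk3 : 3 ≤ k) (hkn : k < n) (ht1 : 1 ≤ t) (htk : t < k)
    (h1 : p.1 ∈ triF n a t) (h2 : p.2 ∈ triF n (a + (t : ZMod n)) (k - t)) :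
    glue n a k t p ∈ triF n a k := by
  obtain ⟨hA1, hN1, hC1⟩ := mem_triF.mp h1
  obtain ⟨hA2, hN2, hC2⟩ := mem_triF.mp h2
  have ha0 : a + ((0 : ℕ) : ZMod n) = a := ha0' a
  have hA2' : ∀ d ∈ p.2, ∃ i j : ℕ, i + 2 ≤ j ∧ j ≤ k ∧ t ≤ i ∧ ¬(i = t ∧ j = k) ∧
      d = {a + (i : ZMod n), a + (j : ZMod n)} :=
    fun d hd => (arcdiag_shift a (by omega)).mp (hA2 d hd)
  rw [mem_triF]
  refine ⟨?_, ?_, ?_⟩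
  · intro d hd
    rcases mem_glue.mp hd with h | h | ⟨hg, rfl⟩ | ⟨hg, rfl⟩
    · obtain ⟨i, j, hij, hjt, hnot, rfl⟩ := hA1 d h
      exact ⟨i, j, hij, by omega, by omega, rfl⟩
    · obtain ⟨i, j, hij, hjk, hti, hnot, rfl⟩ := hA2' d h
      exact ⟨i, j, hij, hjk, by omega, rfl⟩
    · exact ⟨0, t, by omega, by omega, by omega, by rw [ha0]⟩
    · exact ⟨t, k, by omega, le_refl k, by omega, rfl⟩
  · intro d1 hd1 d2 hd2 hne
    rcases mem_glue.mp hd1 with h | h | ⟨hg1, rfl⟩ | ⟨hg1, rfl⟩ <;>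
      rcases mem_glue.mp hd2 with h' | h' | ⟨hg2, rfl⟩ | ⟨hg2, rfl⟩
    · exact hN1 _ h _ h' hne
    · obtain ⟨i, j, hij, hjt, hnot, rfl⟩ := hA1 d1 h
      obtain ⟨x, y, hxy, hyk, htx, hnot2, rfl⟩ := hA2' d2 h'
      exact cross_pos hn a (by omega) (by omega) (by omega) (by omega) (by omega)
    · obtain ⟨i, j, hij, hjt, hnot, rfl⟩ := hA1 d1 h
      have hx := cross_pos (n := n) hn a (i1 := i) (j1 := j) (i2 := 0) (j2 := t)
        (by omega) (by omega) (by omega) (by omega) (by omega)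
      rw [ha0' a] at hx
      exact hx
    · obtain ⟨i, j, hij, hjt, hnot, rfl⟩ := hA1 d1 h
      exact cross_pos (n := n) hn a (i1 := i) (j1 := j) (i2 := t) (j2 := k)
        (by omega) (by omega) (by omega) (by omega) (by omega)
    · obtain ⟨i, j, hij, hjk, hti, hnot, rfl⟩ := hA2' d1 h
      obtain ⟨x, y, hxy, hyt, hnot2, rfl⟩ := hA1 d2 h'
      exact cross_pos hn a (by omega) (by omega) (by omega) (by omega) (by omega)
    · exact hN2 _ h _ h' hne
    · obtain ⟨i, j, hij, hjk, hti, hnot, rfl⟩ := hA2' d1 h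
      have hx := cross_pos (n := n) hn a (i1 := i) (j1 := j) (i2 := 0) (j2 := t)
        (by omega) (by omega) (by omega) (by omega) (by omega)
      rw [ha0' a] at hx
      exact hx
    · obtain ⟨i, j, hij, hjk, hti, hnot, rfl⟩ := hA2' d1 h
      exact cross_pos (n := n) hn a (i1 := i) (j1 := j) (i2 := t) (j2 := k)
        (by omega) (by omega) (by omega) (by omega) (by omega)
    · obtain ⟨x, y, hxy, hyt, hnot, rfl⟩ := hA1 d2 h'
      have hx := cross_pos (n := n) hn a (i1 := 0) (j1 := t) (i2 := x) (j2 := y)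
        (by omega) (by omega) (by omega) (by omega) (by omega)
      rw [ha0' a] at hx
      exact hx
    · obtain ⟨x, y, hxy, hyk, htx, hnot, rfl⟩ := hA2' d2 h'
      have hx := cross_pos (n := n) hn a (i1 := 0) (j1 := t) (i2 := x) (j2 := y)
        (by omega) (by omega) (by omega) (by omega) (by omega)
      rw [ha0' a] at hx
      exact hx
    · exact absurd rfl hne
    · have hx := cross_pos (n := n) hn a (i1 := 0) (j1 := t) (i2 := t) (j2 := k)
        (by omega) (by omega) (by omega) (by omega) (by omega)
      rw [ha0' a] at hx
      exact hx
    · obtain ⟨x, y, hxy, hyt, hnot, rfl⟩ := hA1 d2 h'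
      exact cross_pos (n := n) hn a (i1 := t) (j1 := k) (i2 := x) (j2 := y)
        (by omega) (by omega) (by omega) (by omega) (by omega)
    · obtain ⟨x, y, hxy, hyk, htx, hnot, rfl⟩ := hA2' d2 h'
      exact cross_pos (n := n) hn a (i1 := t) (j1 := k) (i2 := x) (j2 := y)
        (by omega) (by omega) (by omega) (by omega) (by omega)
    · have hx := cross_pos (n := n) hn a (i1 := t) (j1 := k) (i2 := 0) (j2 := t)
        (by omega) (by omega) (by omega) (by omega) (by omega)
      rw [ha0' a] at hx
      exact hx
    · exact absurd rfl hne
  · have hd12 : Disjoint p.1 p.2 := by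
      rw [Finset.disjoint_left]
      intro d hdl hdr
      exact arc_left_right_disj hn a ht1 htk hkn (hA1 d hdl) (hA2 d hdr)
    have hc1p1 : ({a, a + (t : ZMod n)} : Finset (ZMod n)) ∉ p.1 :=
      fun h => not_arc_left_c1 hn a ht1 htk hkn (hA1 _ h)
    have hc1p2 : ({a, a + (t : ZMod n)} : Finset (ZMod n)) ∉ p.2 :=
      fun h => not_arc_right_c1 hn a ht1 htk hkn (hA2 _ h)
    have hc2p1 : ({a + (t : ZMod n), a + (k : ZMod n)} : Finset (ZMod n)) ∉ p.1 :=
      fun h => not_arc_left_c2 hn a ht1 htk hkn (hA1 _ h)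
    have hc2p2 : ({a + (t : ZMod n), a + (k : ZMod n)} : Finset (ZMod n)) ∉ p.2 :=
      fun h => not_arc_right_c2 hn a ht1 htk hkn (hA2 _ h)
    unfold glue
    by_cases g1 : 2 ≤ t <;> by_cases g2 : 2 ≤ k - t
    · rw [if_pos g1, if_pos g2]
      have hdc : Disjoint ({({a, a + (t : ZMod n)} : Finset (ZMod n))} : Finset (Finset (ZMod n)))
          {({a + (t : ZMod n), a + (k : ZMod n)} : Finset (ZMod n))} := by
        rw [Finset.disjoint_left]
        intro d hd hd2
        rw [Finset.mem_singleton] at hd hd2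
        exact c1_ne_c2 hn a ht1 htk hkn (by rw [← hd, hd2])
      have hbig : Disjoint (p.1 ∪ p.2)
          (({({a, a + (t : ZMod n)} : Finset (ZMod n))} : Finset (Finset (ZMod n))) ∪
            {({a + (t : ZMod n), a + (k : ZMod n)} : Finset (ZMod n))}) := by
        rw [Finset.disjoint_left]
        intro d hd hd2
        rcases Finset.mem_union.mp hd with h | h <;>
          rcases Finset.mem_union.mp hd2 with h2 | h2 <;>
          rw [Finset.mem_singleton] at h2 <;> subst h2
        · exact hc1p1 h
        · exact hc2p1 h
        · exact hc1p2 h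
        · exact hc2p2 h
      rw [Finset.card_union_of_disjoint hbig, Finset.card_union_of_disjoint hd12,
        Finset.card_union_of_disjoint hdc, Finset.card_singleton, Finset.card_singleton]
      omega
    · rw [if_pos g1, if_neg g2, Finset.union_empty]
      have hbig : Disjoint (p.1 ∪ p.2)
          ({({a, a + (t : ZMod n)} : Finset (ZMod n))} : Finset (Finset (ZMod n))) := by
        rw [Finset.disjoint_left]
        intro d hd hd2
        rw [Finset.mem_singleton] at hd2; subst hd2
        rcases Finset.mem_union.mp hd with h | h
        · exact hc1p1 h
        · exact hc1p2 h
      rw [Finset.card_union_of_disjoint hbig, Finset.card_union_of_disjoint hd12,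
        Finset.card_singleton]
      omega
    · rw [if_neg g1, if_pos g2, Finset.empty_union]
      have hbig : Disjoint (p.1 ∪ p.2)
          ({({a + (t : ZMod n), a + (k : ZMod n)} : Finset (ZMod n))} : Finset (Finset (ZMod n))) := by
        rw [Finset.disjoint_left]
        intro d hd hd2
        rw [Finset.mem_singleton] at hd2; subst hd2
        rcases Finset.mem_union.mp hd with h | h
        · exact hc2p1 h
        · exact hc2p2 h
      rw [Finset.card_union_of_disjoint hbig, Finset.card_union_of_disjoint hd12,
        Finset.card_singleton]
      omega
    · exact absurd hk3 (by omega)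

end Glue

section Filters
open scoped Classical
variable {n : ℕ} [NeZero n]

lemma glue_filter_left (hn : 0 < n) {a : ZMod n} {k t : ℕ}
    {p : Finset (Finset (ZMod n)) × Finset (Finset (ZMod n))}
    (hk3 : 3 ≤ k) (hkn : k < n) (ht1 : 1 ≤ t) (htk : t < k)
    (h1 : p.1 ∈ triF n a t) (h2 : p.2 ∈ triF n (a + (t : ZMod n)) (k - t)) :
    (glue n a k t p).filter (fun d => ArcDiag n a t d) = p.1 := by
  classical
  obtain ⟨hA1, hN1, hC1⟩ := mem_triF.mp h1
  obtain ⟨hA2, hN2, hC2⟩ := mem_triF.mp h2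
  ext d
  rw [Finset.mem_filter]
  constructor
  · rintro ⟨hg, hd⟩
    rcases mem_glue.mp hg with h | h | ⟨hg1, rfl⟩ | ⟨hg2, rfl⟩
    · exact h
    · exact absurd hd (fun hd => arc_left_right_disj hn a ht1 htk hkn hd (hA2 d h))
    · exact absurd hd (not_arc_left_c1 hn a ht1 htk hkn)
    · exact absurd hd (not_arc_left_c2 hn a ht1 htk hkn)
  · intro h
    exact ⟨mem_glue.mpr (Or.inl h), hA1 d h⟩

lemma glue_filter_right (hn : 0 < n) {a : ZMod n} {k t : ℕ}
    {p : Finset (Finset (ZMod n)) × Finset (Finset (ZMod n))}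
    (hk3 : 3 ≤ k) (hkn : k < n) (ht1 : 1 ≤ t) (htk : t < k)
    (h1 : p.1 ∈ triF n a t) (h2 : p.2 ∈ triF n (a + (t : ZMod n)) (k - t)) :
    (glue n a k t p).filter (fun d => ArcDiag n (a + (t : ZMod n)) (k - t) d) = p.2 := by
  classical
  obtain ⟨hA1, hN1, hC1⟩ := mem_triF.mp h1
  obtain ⟨hA2, hN2, hC2⟩ := mem_triF.mp h2
  ext d
  rw [Finset.mem_filter]
  constructor
  · rintro ⟨hg, hd⟩
    rcases mem_glue.mp hg with h | h | ⟨hg1, rfl⟩ | ⟨hg2, rfl⟩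
    · exact absurd hd (fun hd => arc_left_right_disj hn a ht1 htk hkn (hA1 d h) hd)
    · exact h
    · exact absurd hd (not_arc_right_c1 hn a ht1 htk hkn)
    · exact absurd hd (not_arc_right_c2 hn a ht1 htk hkn)
  · intro h
    exact ⟨mem_glue.mpr (Or.inr (Or.inl h)), hA2 d h⟩

lemma splitter (hn : 0 < n) {k : ℕ} (hk3 : 3 ≤ k) (hkn : k < n) {a : ZMod n}
    {D : Finset (Finset (ZMod n))} (hD : D ∈ triF n a k) :
    ∃ t, 1 ≤ t ∧ t < k ∧
      (D.filter (fun d => ArcDiag n a t d)) ∈ triF n a t ∧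
      (D.filter (fun d => ArcDiag n (a + (t : ZMod n)) (k - t) d)) ∈
        triF n (a + (t : ZMod n)) (k - t) ∧
      D = glue n a k t (D.filter (fun d => ArcDiag n a t d),
        D.filter (fun d => ArcDiag n (a + (t : ZMod n)) (k - t) d)) := by
  classical
  obtain ⟨hdiag, hnc, hcard⟩ := mem_triF.mp hD
  obtain ⟨t, ht1, htk, hc1D2t, h2tc1, split⟩ := exists_split hn hk3 hkn a D hdiag hnc
  set c1 : Finset (ZMod n) := {a, a + (t : ZMod n)} with hc1def
  set c2 : Finset (ZMod n) := {a + (t : ZMod n), a + (k : ZMod n)} with hc2def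
  set D1 := D.filter (fun d => ArcDiag n a t d) with hD1
  set D2 := D.filter (fun d => ArcDiag n (a + (t : ZMod n)) (k - t) d) with hD2
  set C := D.filter (fun d => d = c1 ∨ d = c2) with hCdef
  have hsub : D ⊆ D1 ∪ D2 ∪ C := by
    intro d hd
    rcases split d hd with h | h | h | h
    · exact mem_union_left _ (mem_union_left _ (mem_filter.mpr ⟨hd, h⟩))
    · exact mem_union_left _ (mem_union_right _ (mem_filter.mpr ⟨hd, h⟩))
    · exact mem_union_right _ (mem_filter.mpr ⟨hd, Or.inl h⟩)
    · exact mem_union_right _ (mem_filter.mpr ⟨hd, Or.inr h⟩)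
  have hcardle : D.card ≤ D1.card + D2.card + C.card := by
    calc D.card ≤ (D1 ∪ D2 ∪ C).card := card_le_card hsub
      _ ≤ (D1 ∪ D2).card + C.card := card_union_le _ _
      _ ≤ D1.card + D2.card + C.card := Nat.add_le_add_right (card_union_le _ _) _
  have hd1 : D1.card ≤ t - 2 :=
    arc_card_le hn t (by omega) a D1 (fun d hd => (mem_filter.mp hd).2)
      (noncross_subset (filter_subset _ _) hnc)
  have hd2 : D2.card ≤ (k - t) - 2 :=
    arc_card_le hn (k - t) (by omega) (a + (t : ZMod n)) D2
      (fun d hd => (mem_filter.mp hd).2) (noncross_subset (filter_subset _ _) hnc)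
  have hc2D2t : c2 ∈ D → 2 ≤ k - t := by
    intro h
    obtain ⟨i, j, hij2, hjk, hnot, heq⟩ := hdiag c2 h
    rw [hc2def] at heq
    have := pair_pos_inj hn a htk (show i < j by omega) hkn (by omega) heq
    omega
  -- chord membership forced by maximal cardinality
  have hCcard : C.card ≤ (if c1 ∈ D then 1 else 0) + (if c2 ∈ D then 1 else 0) := by
    by_cases m1 : c1 ∈ D <;> by_cases m2 : c2 ∈ D
    · rw [if_pos m1, if_pos m2]
      have : C ⊆ {c1, c2} := by
        intro d hd
        rcases (mem_filter.mp hd).2 with h | h <;> simp [h]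
      exact le_trans (card_le_card this) (le_trans (card_insert_le _ _) (by simp))
    · rw [if_pos m1, if_neg m2]
      have : C ⊆ {c1} := by
        intro d hd
        rcases (mem_filter.mp hd).2 with h | h
        · simp [h]
        · exact absurd ((mem_filter.mp hd).1 : d ∈ D) (by rw [h]; exact m2)
      exact le_trans (card_le_card this) (by simp)
    · rw [if_neg m1, if_pos m2]
      have : C ⊆ {c2} := by
        intro d hd
        rcases (mem_filter.mp hd).2 with h | h
        · exact absurd ((mem_filter.mp hd).1 : d ∈ D) (by rw [h]; exact m1)
        · simp [h]
      exact le_trans (card_le_card this) (by simp)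
    · rw [if_neg m1, if_neg m2]
      have : C = ∅ := by
        rw [Finset.eq_empty_iff_forall_notMem]
        intro d hd
        rcases (mem_filter.mp hd).2 with h | h
        · exact m1 (h ▸ (mem_filter.mp hd).1)
        · exact m2 (h ▸ (mem_filter.mp hd).1)
      simp [this]
  have hforce : D1.card = t - 2 ∧ D2.card = (k - t) - 2 ∧
      (2 ≤ t → c1 ∈ D) ∧ (2 ≤ k - t → c2 ∈ D) := by
    by_cases m1 : c1 ∈ D <;> by_cases m2 : c2 ∈ D
    · rw [if_pos m1, if_pos m2] at hCcard
      have e1 := hc1D2t m1; have e2 := hc2D2t m2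
      exact ⟨by omega, by omega, fun _ => m1, fun _ => m2⟩
    · rw [if_pos m1, if_neg m2] at hCcard
      have e1 := hc1D2t m1
      exact ⟨by omega, by omega, fun _ => m1, fun h2 => absurd h2 (by omega)⟩
    · rw [if_neg m1, if_pos m2] at hCcard
      have e2 := hc2D2t m2
      exact ⟨by omega, by omega, fun h => absurd h (by omega), fun _ => m2⟩
    · rw [if_neg m1, if_neg m2] at hCcard
      exfalso; omega
  obtain ⟨hD1c, hD2c, hm1, hm2⟩ := hforce
  refine ⟨t, ht1, htk, ?_, ?_, ?_⟩
  · exact mem_triF.mpr ⟨fun d hd => (mem_filter.mp hd).2,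
      noncross_subset (filter_subset _ _) hnc, hD1c⟩
  · exact mem_triF.mpr ⟨fun d hd => (mem_filter.mp hd).2,
      noncross_subset (filter_subset _ _) hnc, hD2c⟩
  · ext d
    constructor
    · intro hd
      rw [mem_glue]
      rcases split d hd with h | h | h | h
      · exact Or.inl (mem_filter.mpr ⟨hd, h⟩)
      · exact Or.inr (Or.inl (mem_filter.mpr ⟨hd, h⟩))
      · have hc1d : d = c1 := by rw [h, hc1def]
        exact Or.inr (Or.inr (Or.inl ⟨hc1D2t (hc1d ▸ hd), by rw [h]⟩))
      · have hc2d : d = c2 := by rw [h, hc2def]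
        exact Or.inr (Or.inr (Or.inr ⟨hc2D2t (hc2d ▸ hd), by rw [h]⟩))
    · intro hd
      rcases mem_glue.mp hd with h | h | ⟨g, heq⟩ | ⟨g, heq⟩
      · exact filter_subset _ _ h
      · exact filter_subset _ _ h
      · exact (heq.trans hc1def.symm) ▸ hm1 g
      · exact (heq.trans hc2def.symm) ▸ hm2 g

end Filters

section MainCount
open scoped Classical
variable {n : ℕ} [NeZero n]

lemma catalan_sum_aux (m : ℕ) :
    ∑ i ∈ Finset.range (m + 1), catalan i * catalan (m - i) = catalan (m + 1) := by
  rw [catalan_succ]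
  exact (Fin.sum_univ_eq_sum_range (fun i => catalan i * catalan (m - i)) (m + 1)).symm

lemma triF_card (hn : 0 < n) :
    ∀ k, 1 ≤ k → k < n → ∀ a : ZMod n, (triF n a k).card = catalan (k - 1) := by
  intro k
  induction k using Nat.strong_induction_on with
  | _ k IH =>
    intro hk1 hkn a
    by_cases hk3 : k < 3
    · have hsing : triF n a k = {∅} := by
        ext D
        rw [mem_triF, Finset.mem_singleton]
        constructor
        · rintro ⟨h1, h2, h3⟩
          rw [← Finset.card_eq_zero]
          omega
        · intro h
          subst h
          refine ⟨fun d hd => absurd hd (Finset.notMem_empty _),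
            fun d hd => absurd hd (Finset.notMem_empty _), ?_⟩
          simp only [Finset.card_empty]
          omega
      rw [hsing, card_singleton]
      interval_cases k
      · simp [catalan_zero]
      · simp [catalan_one]
    · push_neg at hk3
      have key : triF n a k = (Finset.Ico 1 k).biUnion (fun t =>
          ((triF n a t) ×ˢ (triF n (a + (t : ZMod n)) (k - t))).image (glue n a k t)) := by
        ext D
        constructor
        · intro hD
          obtain ⟨t, ht1, htk, hm1, hm2, heq⟩ := splitter hn hk3 hkn hD
          rw [mem_biUnion]
          exact ⟨t, mem_Ico.mpr ⟨ht1, htk⟩,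
            mem_image.mpr ⟨(_, _), mem_product.mpr ⟨hm1, hm2⟩, heq.symm⟩⟩
        · intro hD
          rw [mem_biUnion] at hD
          obtain ⟨t, htI, hD⟩ := hD
          rw [mem_image] at hD
          obtain ⟨p, hp, rfl⟩ := hD
          rw [mem_Ico] at htI
          exact glue_mem hn hk3 hkn htI.1 htI.2 (mem_product.mp hp).1 (mem_product.mp hp).2
      have hdisj : ∀ t, 1 ≤ t → ∀ t', t' < k → t < t' → ∀ D : Finset (Finset (ZMod n)),
          D ∈ ((triF n a t) ×ˢ (triF n (a + (t : ZMod n)) (k - t))).image (glue n a k t) →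
          D ∈ ((triF n a t') ×ˢ (triF n (a + (t' : ZMod n)) (k - t'))).image (glue n a k t') →
          False := by
        intro t ht1 t' ht'k htt' D hD1 hD2
        obtain ⟨p, hp, rfl⟩ := mem_image.mp hD1
        obtain ⟨q, hq, heqD⟩ := mem_image.mp hD2
        rw [mem_product] at hp hq
        have hDtri := glue_mem hn hk3 hkn ht1 (by omega) hp.1 hp.2
        obtain ⟨hAD, hND, hCD⟩ := mem_triF.mp hDtri
        have hc2t : ({a + (t : ZMod n), a + (k : ZMod n)} : Finset (ZMod n)) ∈ glue n a k t p :=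
          mem_glue.mpr (Or.inr (Or.inr (Or.inr ⟨by omega, rfl⟩)))
        have hc1t' : ({a, a + (t' : ZMod n)} : Finset (ZMod n)) ∈ glue n a k t p := by
          rw [← heqD]
          exact mem_glue.mpr (Or.inr (Or.inr (Or.inl ⟨by omega, rfl⟩)))
        have hne : ({a + (t : ZMod n), a + (k : ZMod n)} : Finset (ZMod n)) ≠
            ({a, a + (t' : ZMod n)} : Finset (ZMod n)) := by
          intro heq
          have heq' : ({a + (t : ZMod n), a + (k : ZMod n)} : Finset (ZMod n)) =
              {a + ((0 : ℕ) : ZMod n), a + (t' : ZMod n)} := by rw [ha0']; exact heq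
          have := pair_pos_inj hn a (by omega : t < k) (show (0:ℕ) < t' by omega)
            hkn (by omega) heq'
          omega
        have hcr : Crosses n ({a + (t : ZMod n), a + (k : ZMod n)} : Finset (ZMod n))
            ({a, a + (t' : ZMod n)} : Finset (ZMod n)) := by
          have h' := (crosses_iff hn a hkn (by omega : t' < n) (by omega : t < k)
            (show (0:ℕ) < t' by omega)).mpr (Or.inr ⟨by omega, by omega, by omega⟩)
          rwa [ha0'] at h'
        exact hND _ hc2t _ hc1t' hne hcr
      rw [key, card_biUnion]
      · have hsummand : ∀ t ∈ Finset.Ico 1 k,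
            (((triF n a t) ×ˢ (triF n (a + (t : ZMod n)) (k - t))).image (glue n a k t)).card
              = catalan (t - 1) * catalan (k - t - 1) := by
          intro t htI
          rw [mem_Ico] at htI
          rw [Finset.card_image_of_injOn, Finset.card_product]
          · rw [IH t htI.2 htI.1 (by omega) a, IH (k - t) (by omega) (by omega) (by omega) (a + (t : ZMod n))]
          · intro p hp q hq heq
            rw [Finset.mem_coe, mem_product] at hp hq
            have e1 : p.1 = q.1 := by
              rw [← glue_filter_left hn hk3 hkn htI.1 htI.2 hp.1 hp.2, heq,
                glue_filter_left hn hk3 hkn htI.1 htI.2 hq.1 hq.2]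
            have e2 : p.2 = q.2 := by
              rw [← glue_filter_right hn hk3 hkn htI.1 htI.2 hp.1 hp.2, heq,
                glue_filter_right hn hk3 hkn htI.1 htI.2 hq.1 hq.2]
            exact Prod.ext e1 e2
        rw [Finset.sum_congr rfl hsummand, Finset.sum_Ico_eq_sum_range]
        have hcongr : ∀ i ∈ Finset.range (k - 1),
            catalan (1 + i - 1) * catalan (k - (1 + i) - 1)
              = catalan i * catalan ((k - 2) - i) := by
          intro i hi
          rw [show 1 + i - 1 = i by omega, show k - (1 + i) - 1 = (k - 2) - i by omega]
        rw [Finset.sum_congr rfl hcongr, show k - 1 = (k - 2) + 1 by omega]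
        exact catalan_sum_aux (k - 2)
      · intro t ht t' ht' hne
        rw [Function.onFun, Finset.disjoint_left]
        intro D hDt hDt'
        rw [Finset.mem_coe, mem_Ico] at ht ht'
        rcases lt_or_gt_of_ne hne with h | h
        · exact hdisj t ht.1 t' ht'.2 h D hDt hDt'
        · exact hdisj t' ht'.1 t ht.2 h D hDt' hDt

end MainCount

section Rot
variable {n : ℕ}

lemma rot_zero (D : Finset (Finset (ZMod n))) : rotateDiagonals n 0 D = D := by
  unfold rotateDiagonals
  have h : (fun d : Finset (ZMod n) => d.image (fun x => x + (0 : ZMod n))) = id := by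
    funext d; simp
  rw [h, Finset.image_id]

lemma rot_comp (k l : ZMod n) (D : Finset (Finset (ZMod n))) :
    rotateDiagonals n k (rotateDiagonals n l D) = rotateDiagonals n (l + k) D := by
  unfold rotateDiagonals
  rw [Finset.image_image]
  congr 1
  funext d
  simp only [Function.comp_apply]
  rw [Finset.image_image]
  congr 1
  funext x
  simp [add_assoc]

lemma rot_tri {D : Finset (Finset (ZMod n))} (k : ZMod n) (hD : IsTriangulation n D) :
    IsTriangulation n (rotateDiagonals n k D) := by
  have inj : Function.Injective (fun x : ZMod n => x + k) := add_left_injective k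
  refine ⟨?_, ?_, ?_⟩
  · intro d' hd'
    obtain ⟨d, hd, rfl⟩ := Finset.mem_image.mp hd'
    refine ⟨by rw [Finset.card_image_of_injective _ inj]; exact (hD.1 d hd).1, ?_⟩
    intro x' hx' y' hy' hne
    obtain ⟨x, hx, rfl⟩ := Finset.mem_image.mp hx'
    obtain ⟨y, hy, rfl⟩ := Finset.mem_image.mp hy'
    have hxy : x ≠ y := fun e => hne (by rw [e])
    rintro (h | h)
    · exact (hD.1 d hd).2 x hx y hy hxy (Or.inl (by linear_combination h))
    · exact (hD.1 d hd).2 x hx y hy hxy (Or.inr (by linear_combination h))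
  · intro d1' h1' d2' h2' hne hcr
    obtain ⟨d1, hd1, rfl⟩ := Finset.mem_image.mp h1'
    obtain ⟨d2, hd2, rfl⟩ := Finset.mem_image.mp h2'
    have hdne : d1 ≠ d2 := fun e => hne (by rw [e])
    obtain ⟨A, B, X, Y, e1, e2, s1, s2⟩ := hcr
    have himg : ∀ (d : Finset (ZMod n)) (A B : ZMod n), d.image (fun x => x + k) = {A, B} →
        d = {A - k, B - k} := by
      intro d A B he
      have h2 := congrArg (Finset.image (fun x => x - k)) he
      rwa [Finset.image_image,
        show ((fun x : ZMod n => x - k) ∘ fun x => x + k) = id from funext (fun x => by simp),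
        Finset.image_id, Finset.image_insert, Finset.image_singleton] at h2
    refine hD.2.1 d1 hd1 d2 hd2 hdne ⟨A - k, B - k, X - k, Y - k, himg _ _ _ e1, himg _ _ _ e2,
      ?_, ?_⟩
    · unfold StrictBtw
      rw [show X - k - (A - k) = X - A by ring, show B - k - (A - k) = B - A by ring]
      exact s1
    · unfold StrictBtw
      rw [show Y - k - (B - k) = Y - B by ring, show A - k - (B - k) = A - B by ring]
      exact s2
  · unfold rotateDiagonals
    rw [Finset.card_image_of_injective _ (Finset.image_injective inj)]
    exact hD.2.2

lemma rot_fixfree (hn5 : 5 ≤ n) (hp : n.Prime) {D : Finset (Finset (ZMod n))}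
    (hD : IsTriangulation n D) {k : ZMod n} (h : rotateDiagonals n k D = D) : k = 0 := by
  haveI : NeZero n := ⟨by omega⟩
  haveI : Fact n.Prime := ⟨hp⟩
  by_contra hk
  have hiter : ∀ m : ℕ, rotateDiagonals n ((m : ZMod n) * k) D = D := by
    intro m
    induction m with
    | zero => simpa using rot_zero D
    | succ m ih =>
        have e : ((m + 1 : ℕ) : ZMod n) * k = (m : ZMod n) * k + k := by push_cast; ring
        rw [e, ← rot_comp, ih, h]
  have hall : ∀ c : ZMod n, rotateDiagonals n c D = D := by
    intro c
    have e1 : (((c * k⁻¹).val : ℕ) : ZMod n) = c * k⁻¹ := ZMod.natCast_rightInverse (c * k⁻¹)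
    have e2 : (((c * k⁻¹).val : ℕ) : ZMod n) * k = c := by
      rw [e1, mul_assoc, inv_mul_cancel₀ hk, mul_one]
    rw [← e2]
    exact hiter _
  obtain ⟨d, hd⟩ := Finset.card_pos.mp (show 0 < D.card by rw [hD.2.2]; omega)
  obtain ⟨x, y, hxy, rfl⟩ := Finset.card_eq_two.mp (hD.1 d hd).1
  have hmem : ∀ c : ZMod n, ({x + c, y + c} : Finset (ZMod n)) ∈ D := by
    intro c
    have h1 : ({x, y} : Finset (ZMod n)).image (fun z => z + c) = {x + c, y + c} := by
      rw [Finset.image_insert, Finset.image_singleton]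
    have h2 : ({x, y} : Finset (ZMod n)).image (fun z => z + c) ∈ rotateDiagonals n c D :=
      Finset.mem_image_of_mem _ hd
    rw [hall c, h1] at h2
    exact h2
  have h2ne : (2 : ZMod n) ≠ 0 := by
    intro h2
    have : (((2:ℕ) : ZMod n)) = 0 := by exact_mod_cast h2
    rw [ZMod.natCast_eq_zero_iff] at this
    have := Nat.le_of_dvd (by norm_num) this
    omega
  have hinj : ∀ c1 ∈ (Finset.univ : Finset (ZMod n)), ∀ c2 ∈ Finset.univ,
      (fun c : ZMod n => ({x + c, y + c} : Finset (ZMod n))) c1 =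
        (fun c : ZMod n => ({x + c, y + c} : Finset (ZMod n))) c2 → c1 = c2 := by
    intro c1 _ c2 _ heq
    dsimp only at heq
    have hne : x + c1 ≠ y + c1 := fun e => hxy (by linear_combination e)
    rcases pair_cases heq hne with ⟨e1, e2⟩ | ⟨e1, e2⟩
    · exact (add_left_cancel e1).symm
    · exfalso
      have : (2 : ZMod n) * (x - y) = 0 := by linear_combination e1 - e2
      rcases mul_eq_zero.mp this with h' | h'
      · exact h2ne h'
      · exact hxy (by linear_combination h')
  have hcardle : (Finset.univ : Finset (ZMod n)).card ≤ D.card :=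
    Finset.card_le_card_of_injOn _ (fun c _ => hmem c) hinj
  rw [Finset.card_univ, ZMod.card n, hD.2.2] at hcardle
  omega

end Rot

section Final
open scoped Classical
variable {n : ℕ}

lemma isDiag_iff [NeZero n] (hn5 : 5 ≤ n) {d : Finset (ZMod n)} :
    IsDiagonal n d ↔ ArcDiag n (0 : ZMod n) (n - 1) d := by
  have hn : 0 < n := by omega
  constructor
  · rintro ⟨hcard, hadj⟩
    obtain ⟨x, y, hxy, rfl⟩ := Finset.card_eq_two.mp hcard
    have hadj1 : ¬ CycAdj n x y := hadj x (by simp) y (by simp) hxy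
    have key : ∀ u v : ZMod n, u.val < v.val → ¬ CycAdj n u v →
        ∃ i j : ℕ, i + 2 ≤ j ∧ j ≤ n - 1 ∧ ¬(i = 0 ∧ j = n - 1) ∧
          ({u, v} : Finset (ZMod n)) = {(0 : ZMod n) + (i : ZMod n), (0 : ZMod n) + (j : ZMod n)} := by
      intro u v huv hnadj
      have hcu : ((u.val : ℕ) : ZMod n) = u := ZMod.natCast_rightInverse u
      have hcv : ((v.val : ℕ) : ZMod n) = v := ZMod.natCast_rightInverse v
      have hvlt := ZMod.val_lt v
      refine ⟨u.val, v.val, ?_, by omega, ?_, by rw [zero_add, zero_add, hcu, hcv]⟩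
      · by_contra hlt
        have hj : v.val = u.val + 1 := by omega
        apply hnadj; left
        rw [← hcv, ← hcu, hj]; push_cast; ring
      · rintro ⟨h0, h1⟩
        apply hnadj; right
        have e : ((v.val + 1 : ℕ) : ZMod n) = ((0 : ℕ) : ZMod n) := by
          rw [show v.val + 1 = n from by omega, ZMod.natCast_self, Nat.cast_zero]
        rw [← hcv, ← hcu, h0, Nat.cast_zero]
        push_cast at e
        linear_combination -e
    rcases lt_trichotomy x.val y.val with h | h | h
    · exact key x y h hadj1
    · exfalso
      apply hxy
      have hcx : ((x.val : ℕ) : ZMod n) = x := ZMod.natCast_rightInverse x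
      have hcy : ((y.val : ℕ) : ZMod n) = y := ZMod.natCast_rightInverse y
      rw [← hcx, ← hcy, h]
    · obtain ⟨i, j, h1, h2, h3, h4⟩ := key y x h (fun hc => hadj1 hc.symm)
      exact ⟨i, j, h1, h2, h3, by rw [Finset.pair_comm]; exact h4⟩
  · rintro ⟨i, j, hij, hjk, hnot, rfl⟩
    have hjn : j < n := by omega
    have hin : i < n := by omega
    have hne : (0 : ZMod n) + (i : ZMod n) ≠ (0 : ZMod n) + (j : ZMod n) :=
      fun h => absurd (zmod_add_inj hn hin hjn h) (by omega)
    refine ⟨Finset.card_pair hne, ?_⟩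
    have hmain : ¬ CycAdj n ((0 : ZMod n) + (i : ZMod n)) ((0 : ZMod n) + (j : ZMod n)) := by
      rintro (h | h)
      · have h' : (0 : ZMod n) + (j : ZMod n) = (0 : ZMod n) + ((i + 1 : ℕ) : ZMod n) := by
          push_cast
          linear_combination h
        have := zmod_add_inj hn hjn (by omega : i + 1 < n) h'
        omega
      · by_cases hj1 : j + 1 < n
        · have h' : (0 : ZMod n) + (i : ZMod n) = (0 : ZMod n) + ((j + 1 : ℕ) : ZMod n) := by
            push_cast
            linear_combination h
          have := zmod_add_inj hn hin hj1 h'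
          omega
        · have hjn1 : j = n - 1 := by omega
          have e : ((j : ℕ) : ZMod n) + 1 = 0 := by
            have : ((j + 1 : ℕ) : ZMod n) = ((n : ℕ) : ZMod n) := by rw [show j + 1 = n by omega]
            rw [ZMod.natCast_self] at this
            push_cast at this
            linear_combination this
          have h' : (0 : ZMod n) + (i : ZMod n) = (0 : ZMod n) + ((0 : ℕ) : ZMod n) := by
            rw [h, Nat.cast_zero]
            linear_combination e
          have := zmod_add_inj hn hin (by omega : 0 < n) h'
          omega
    have hmem2 : ∀ w ∈ ({(0 : ZMod n) + (i : ZMod n), (0 : ZMod n) + (j : ZMod n)} :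
        Finset (ZMod n)), w = (0 : ZMod n) + (i : ZMod n) ∨ w = (0 : ZMod n) + (j : ZMod n) := by
      intro w hw
      simpa using hw
    intro u hu v hv huv
    rcases hmem2 u hu with h1 | h1 <;> rcases hmem2 v hv with h2 | h2 <;> subst h1 <;> subst h2
    · exact absurd rfl huv
    · exact hmain
    · exact fun hc => hmain hc.symm
    · exact absurd rfl huv

lemma tri_filter_eq [NeZero n] (hn5 : 5 ≤ n) :
    Finset.univ.filter (fun D : Finset (Finset (ZMod n)) => IsTriangulation n D)
      = triF n (0 : ZMod n) (n - 1) := by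
  ext D
  rw [Finset.mem_filter, mem_triF]
  constructor
  · rintro ⟨-, h1, h2, h3⟩
    exact ⟨fun d hd => (isDiag_iff hn5).mp (h1 d hd), h2, by omega⟩
  · rintro ⟨h1, h2, h3⟩
    exact ⟨Finset.mem_univ D, fun d hd => (isDiag_iff hn5).mpr (h1 d hd), h2, by omega⟩

lemma cat_fact (m : ℕ) (hm : 3 ≤ m) :
    catalan m * m.factorial = (m + 2) * ∏ i ∈ Finset.Icc (m + 3) (2 * m), i := by
  have h1 : (m + 1) * catalan m = (2 * m).choose m := succ_mul_catalan_eq_centralBinom m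
  have h2 : (2 * m).choose m * m.factorial * m.factorial = (2 * m).factorial := by
    have h := Nat.choose_mul_factorial_mul_factorial (show m ≤ 2 * m by omega)
    rwa [show 2 * m - m = m by omega] at h
  have efac : ∀ l : ℕ, (∏ i ∈ Finset.Ioc 0 l, i) = l.factorial := by
    intro l
    rw [← Finset.Icc_add_one_left_eq_Ioc, ← Finset.Ico_add_one_right_eq_Icc]
    exact Finset.prod_Ico_id_eq_factorial l
  have key := Finset.prod_Ioc_consecutive (fun i => i) (show 0 ≤ m + 2 by omega)
    (show m + 2 ≤ 2 * m by omega)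
  rw [efac, efac] at key
  have hicc : Finset.Icc (m + 3) (2 * m) = Finset.Ioc (m + 2) (2 * m) := by
    rw [← Finset.Icc_add_one_left_eq_Ioc]; rfl
  rw [hicc]
  have h4 : catalan m * m.factorial * ((m + 1) * m.factorial)
      = ((m + 2) * ∏ i ∈ Finset.Ioc (m + 2) (2 * m), i) * ((m + 1) * m.factorial) := by
    calc catalan m * m.factorial * ((m + 1) * m.factorial)
        = ((m + 1) * catalan m) * m.factorial * m.factorial := by ring
      _ = (2 * m).factorial := by rw [h1]; exact h2
      _ = (m + 2).factorial * ∏ i ∈ Finset.Ioc (m + 2) (2 * m), i := key.symm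
      _ = ((m + 2) * ∏ i ∈ Finset.Ioc (m + 2) (2 * m), i) * ((m + 1) * m.factorial) := by
          rw [Nat.factorial_succ, Nat.factorial_succ]; ring
  exact Nat.eq_of_mul_eq_mul_right (by positivity) h4


/-- For a prime `n ≥ 5`, the number of simple `n`-pyramitoids,
i.e. the number of triangulations of a convex `n`-gon by non-crossing
diagonals counted up to cyclic rotation, equals
`((n+1)(n+2)⋯(2n-4)) / (n-2)!`. -/
theorem count_simple_pyramitoids (n : ℕ) (hn : 5 ≤ n) (hp : n.Prime) :
    Nat.card (Quot (fun D D' : {D : Finset (Finset (ZMod n)) // IsTriangulation n D} =>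
        ∃ k : ZMod n, rotateDiagonals n k D.1 = D'.1))
      = (∏ i ∈ Finset.Icc (n + 1) (2 * n - 4), i) / (n - 2).factorial := by
  classical
  haveI : NeZero n := ⟨by omega⟩
  set r : {D : Finset (Finset (ZMod n)) // IsTriangulation n D} →
      {D : Finset (Finset (ZMod n)) // IsTriangulation n D} → Prop :=
    fun D D' => ∃ k : ZMod n, rotateDiagonals n k D.1 = D'.1 with hr
  have hrefl : ∀ x, r x x := fun x => ⟨0, rot_zero _⟩
  have hsymm : ∀ {x y}, r x y → r y x := by
    rintro x y ⟨k, hk⟩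
    exact ⟨-k, by rw [← hk, rot_comp, add_neg_cancel, rot_zero]⟩
  have htrans : ∀ {x y z}, r x y → r y z → r x z := by
    rintro x y z ⟨k, hk⟩ ⟨l, hl⟩
    exact ⟨k + l, by rw [← hl, ← hk, rot_comp]⟩
  have hmk : ∀ x y, (Quot.mk r x = Quot.mk r y) ↔ r x y := by
    intro x y
    rw [Quot.eq]
    constructor
    · intro h
      induction h with
      | rel a b h => exact h
      | refl a => exact hrefl a
      | symm a b _ ih => exact hsymm ih
      | trans a b c _ _ ih1 ih2 => exact htrans ih1 ih2
    · exact Relation.EqvGen.rel x y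
  have hcardα : Nat.card {D : Finset (Finset (ZMod n)) // IsTriangulation n D}
      = catalan (n - 2) := by
    rw [Nat.card_eq_fintype_card, Fintype.card_subtype, tri_filter_eq hn,
      triF_card (by omega : 0 < n) (n - 1) (by omega) (by omega) 0]
    exact congrArg catalan (by omega)
  have hbij : Function.Bijective (fun p : ZMod n × Quot r =>
      (⟨rotateDiagonals n p.1 (Quot.out p.2).1, rot_tri _ (Quot.out p.2).2⟩ :
        {D : Finset (Finset (ZMod n)) // IsTriangulation n D})) := by
    constructor
    · rintro ⟨k, q⟩ ⟨k', q'⟩ heq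
      have h1 : rotateDiagonals n k (Quot.out q).1 = rotateDiagonals n k' (Quot.out q').1 :=
        congrArg Subtype.val heq
      have hq : q = q' := by
        rw [← Quot.out_eq q, ← Quot.out_eq q', hmk]
        exact ⟨k + -k', by rw [← rot_comp, h1, rot_comp, add_neg_cancel, rot_zero]⟩
      subst hq
      have h2 : rotateDiagonals n (k + -k') (Quot.out q).1 = (Quot.out q).1 := by
        rw [← rot_comp, h1, rot_comp, add_neg_cancel, rot_zero]
      have h3 := rot_fixfree hn hp (Quot.out q).2 h2
      have h4 : k = k' := by
        have := add_neg_eq_zero.mp h3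
        exact this
      rw [h4]
    · intro x
      have hrel : r (Quot.out (Quot.mk r x)) x := (hmk _ _).mp (Quot.out_eq _)
      obtain ⟨k0, hk0⟩ := hrel
      exact ⟨(k0, Quot.mk r x), Subtype.ext hk0⟩
  have hprod := Nat.card_eq_of_bijective _ hbij
  rw [Nat.card_prod, Nat.card_zmod, hcardα] at hprod
  -- now n * Nat.card (Quot r) = catalan (n - 2)
  obtain ⟨m, rfl⟩ : ∃ m, n = m + 2 := ⟨n - 2, by omega⟩
  have hm3 : 3 ≤ m := by omega
  have hcf := cat_fact m hm3
  rw [show m + 2 - 2 = m by omega, show m + 2 + 1 = m + 3 by omega,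
    show 2 * (m + 2) - 4 = 2 * m by omega]
  have hprod' : (m + 2) * Nat.card (Quot r) = catalan m := hprod
  have hq : Nat.card (Quot r) * m.factorial = ∏ i ∈ Finset.Icc (m + 3) (2 * m), i := by
    have hmul : (m + 2) * (Nat.card (Quot r) * m.factorial)
        = (m + 2) * ∏ i ∈ Finset.Icc (m + 3) (2 * m), i := by
      rw [← hcf, ← hprod']
      ring
    exact Nat.eq_of_mul_eq_mul_left (by omega) hmul
  rw [← hq, Nat.mul_div_cancel _ (Nat.factorial_pos m)]

end Final
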